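/- arXiv:1007.5353 — 8 statements merged into one kernel-verified Lean document; each statement's English description precedes it below -/
import Mathlib

section
/- Let C : (0,∞) → (0,∞), let p̃ ∈ (0,∞), and suppose lim_{K→∞} (log K)⁻¹ log(1/C(K)) = p̃. Then there exist positive functions g₁, g₂ regularly varying at infinity with index -p̃ and K₀ > 0 such that g₁(K) ≤ C(K) ≤ g₂(K) for all K > K₀. -/
/-!
Write `C (exp t) = exp (-p t + f t)`; the hypothesis says exactly that `f t = o(t)`.
Dominate `|f t| / t` eventually by an antitone `ε` tending to `0` and put `u t = ∫₀ᵗ ε`.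
Then `|f t| ≤ t ε(t) ≤ u t`, while `u (t + c) - u t → 0` for every shift `c`. The latter makes
`x ↦ x ^ (-p) * exp (± u (log x))` regularly varying of index `-p`, and these two functions
sandwich `C`.
-/

open Real Filter Set MeasureTheory intervalIntegral Topology

def IsRegularlyVarying (g : ℝ → ℝ) (ρ : ℝ) : Prop :=
  ∀ lam > 0, Tendsto (fun x => g (lam * x) / g x) atTop (𝓝 (lam ^ ρ))

lemma exists_antitone_majorant_of_tendsto_zero {g : ℝ → ℝ} (hg : Tendsto g atTop (𝓝 0)) :
    ∃ ε : ℝ → ℝ, Antitone ε ∧ Tendsto ε atTop (𝓝 0) ∧ ∀ᶠ t in atTop, |g t| ≤ ε t := by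
  -- Truncating at `1` keeps every tail bounded without changing `|g|` near infinity.
  set S : ℝ → Set ℝ := fun t => (fun s => min |g s| 1) '' Ici t
  have hne : ∀ t, (S t).Nonempty := fun t => nonempty_Ici.image _
  have hbdd : ∀ t, BddAbove (S t) := fun t => ⟨1, by rintro _ ⟨s, -, rfl⟩; exact min_le_right _ _⟩
  have hsmall : ∀ δ > 0, ∀ᶠ s in atTop, |g s| < δ := fun δ hδ => by
    simpa [Real.dist_eq] using Metric.tendsto_nhds.1 hg δ hδ
  refine ⟨fun t => sSup (S t), fun t₁ t₂ h => csSup_le_csSup (hbdd t₁) (hne t₂)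
    (image_mono (Ici_subset_Ici.2 h)), ?_, ?_⟩
  · refine tendsto_order.2 ⟨fun a ha => Eventually.of_forall fun t => ?_, fun a ha => ?_⟩
    · exact ha.trans_le ((le_min (abs_nonneg _) zero_le_one).trans
        (le_csSup (hbdd t) ⟨t, self_mem_Ici, rfl⟩))
    · obtain ⟨T, hT⟩ := (hsmall (a / 2) (half_pos ha)).exists_forall_of_atTop
      filter_upwards [eventually_ge_atTop T] with t ht
      refine (csSup_le (hne t) ?_).trans_lt (half_lt_self ha)
      rintro _ ⟨s, hs, rfl⟩
      exact (min_le_left _ _).trans (hT s (ht.trans hs)).le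
  · filter_upwards [hsmall 1 one_pos] with t ht
    calc |g t| = min |g t| 1 := (min_eq_left ht.le).symm
      _ ≤ sSup (S t) := le_csSup (hbdd t) ⟨t, self_mem_Ici, rfl⟩

lemma mul_le_integral_of_antitone {ε : ℝ → ℝ} (hanti : Antitone ε) {t : ℝ} (ht : 0 ≤ t) :
    t * ε t ≤ ∫ s in (0 : ℝ)..t, ε s := by
  simpa using integral_mono_on ht (intervalIntegrable_const (μ := volume))
    hanti.intervalIntegrable fun x hx => hanti hx.2

lemma tendsto_integral_add_sub_integral_of_antitone {ε : ℝ → ℝ} (hanti : Antitone ε)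
    (hε : Tendsto ε atTop (𝓝 0)) (c : ℝ) :
    Tendsto (fun t => (∫ s in (0 : ℝ)..t + c, ε s) - ∫ s in (0 : ℝ)..t, ε s) atTop (𝓝 0) := by
  have hbound : ∀ t,
      ‖(∫ s in (0 : ℝ)..t + c, ε s) - ∫ s in (0 : ℝ)..t, ε s‖ ≤ ε (t - |c|) * |c| := by
    intro t
    rw [integral_interval_sub_left hanti.intervalIntegrable hanti.intervalIntegrable]
    refine (intervalIntegral.norm_integral_le_of_norm_le_const (C := ε (t - |c|))
      fun x hx => ?_).trans_eq (by rw [add_sub_cancel_left])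
    have hx : t - |c| ≤ x :=
      (le_min (by linarith [abs_nonneg c]) (by linarith [neg_abs_le c])).trans hx.1.le
    rw [Real.norm_eq_abs, abs_of_nonneg (hanti.le_of_tendsto hε x)]
    exact hanti hx
  have hshift : Tendsto (fun t => t - |c|) atTop atTop :=
    tendsto_atTop_add_const_right _ _ tendsto_id
  exact squeeze_zero_norm hbound (by simpa using (hε.comp hshift).mul_const |c|)

theorem exists_majorant_of_tendsto_div_self_zero {f : ℝ → ℝ}
    (hf : Tendsto (fun t => f t / t) atTop (𝓝 0)) :
    ∃ u : ℝ → ℝ, (∀ c, Tendsto (fun t => u (t + c) - u t) atTop (𝓝 0)) ∧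
      ∀ᶠ t in atTop, |f t| ≤ u t := by
  obtain ⟨ε, hanti, hε, hmaj⟩ := exists_antitone_majorant_of_tendsto_zero hf
  refine ⟨fun t => ∫ s in (0 : ℝ)..t, ε s,
    tendsto_integral_add_sub_integral_of_antitone hanti hε, ?_⟩
  filter_upwards [hmaj, eventually_gt_atTop 0] with t hεt ht
  calc |f t| = t * |f t / t| := by rw [abs_div, abs_of_pos ht]; field_simp
    _ ≤ t * ε t := mul_le_mul_of_nonneg_left hεt ht.le
    _ ≤ ∫ s in (0 : ℝ)..t, ε s := mul_le_integral_of_antitone hanti ht.le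

lemma isRegularlyVarying_rpow_mul_exp_comp_log {v : ℝ → ℝ}
    (hv : ∀ c, Tendsto (fun t => v (t + c) - v t) atTop (𝓝 0)) (ρ : ℝ) :
    IsRegularlyVarying (fun x => x ^ ρ * exp (v (log x))) ρ := by
  intro lam hlam
  have hexp : Tendsto (fun x => exp (v (log x + log lam) - v (log x))) atTop (𝓝 1) := by
    simpa [Function.comp_def] using
      (continuous_exp.tendsto 0).comp ((hv (log lam)).comp tendsto_log_atTop)
  have hlim := hexp.const_mul (lam ^ ρ)
  rw [mul_one] at hlim
  refine hlim.congr' ?_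
  filter_upwards [eventually_gt_atTop 0] with x hx
  have : 0 < x ^ ρ := rpow_pos_of_pos hx ρ
  rw [mul_rpow hlam.le hx.le, log_mul hlam.ne' hx.ne', add_comm (log lam), exp_sub]
  field_simp

lemma tendsto_log_comp_exp_add_mul_div_self {C : ℝ → ℝ} {p : ℝ}
    (hlim : Tendsto (fun K => (log K)⁻¹ * log (1 / C K)) atTop (𝓝 p)) :
    Tendsto (fun t => (log (C (exp t)) + p * t) / t) atTop (𝓝 0) := by
  have h := (tendsto_const_nhds (x := p)).sub (hlim.comp tendsto_exp_atTop)
  rw [sub_self] at h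
  refine h.congr' ?_
  filter_upwards [eventually_ne_atTop 0] with t ht
  simp only [Function.comp_apply, log_exp, one_div, log_inv]
  field_simp
  ring

lemma eq_rpow_neg_mul_exp {K c : ℝ} (hK : 0 < K) (hc : 0 < c) (p : ℝ) :
    c = K ^ (-p) * exp (log c + p * log K) := by
  rw [rpow_def_of_pos hK, ← exp_add, show log K * -p + (log c + p * log K) = log c by ring,
    exp_log hc]

theorem weak_pareto_of_log_limit_general (C : ℝ → ℝ) (p : ℝ)
    (hCpos : ∀ K > 0, 0 < C K)
    (hlim : Filter.Tendsto (fun K => (Real.log K)⁻¹ * Real.log (1 / C K))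
      Filter.atTop (nhds p)) :
    ∃ g₁ g₂ : ℝ → ℝ, (∀ x > 0, 0 < g₁ x) ∧ (∀ x > 0, 0 < g₂ x) ∧
      (∀ lam > 0, Filter.Tendsto (fun x => g₁ (lam * x) / g₁ x) Filter.atTop
        (nhds (lam ^ (-p)))) ∧
      (∀ lam > 0, Filter.Tendsto (fun x => g₂ (lam * x) / g₂ x) Filter.atTop
        (nhds (lam ^ (-p)))) ∧
      ∃ K₀ > 0, ∀ K > K₀, g₁ K ≤ C K ∧ C K ≤ g₂ K := by
  obtain ⟨u, hu, hfu⟩ :=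
    exists_majorant_of_tendsto_div_self_zero (tendsto_log_comp_exp_add_mul_div_self hlim)
  have hnu : ∀ c, Tendsto (fun t => -u (t + c) - -u t) atTop (𝓝 0) := fun c => by
    simpa only [neg_zero, neg_sub_neg, neg_sub] using (hu c).neg
  refine ⟨fun x => x ^ (-p) * exp (-u (log x)), fun x => x ^ (-p) * exp (u (log x)),
    fun x hx => by positivity, fun x hx => by positivity,
    isRegularlyVarying_rpow_mul_exp_comp_log (v := fun t => -u t) hnu (-p),
    isRegularlyVarying_rpow_mul_exp_comp_log hu (-p), ?_⟩
  obtain ⟨T, hT⟩ := hfu.exists_forall_of_atTop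
  refine ⟨exp T, exp_pos T, fun K hK => ?_⟩
  have hK0 : 0 < K := (exp_pos T).trans hK
  have hbound := abs_le.1 (hT (log K) ((lt_log_iff_exp_lt hK0).2 hK).le)
  rw [exp_log hK0] at hbound
  dsimp only
  rw [eq_rpow_neg_mul_exp hK0 (hCpos K hK0) p]
  exact ⟨by gcongr; linarith [hbound.1], by gcongr; exact hbound.2⟩

theorem weak_pareto_of_log_limit (C : ℝ → ℝ) (p : ℝ) (hp : 0 < p)
    (hCpos : ∀ K > 0, 0 < C K)
    (hlim : Filter.Tendsto (fun K => (Real.log K)⁻¹ * Real.log (1 / C K))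
      Filter.atTop (nhds p)) :
    ∃ g₁ g₂ : ℝ → ℝ, (∀ x > 0, 0 < g₁ x) ∧ (∀ x > 0, 0 < g₂ x) ∧
      (∀ lam > 0, Filter.Tendsto (fun x => g₁ (lam * x) / g₁ x) Filter.atTop
        (nhds (lam ^ (-p)))) ∧
      (∀ lam > 0, Filter.Tendsto (fun x => g₂ (lam * x) / g₂ x) Filter.atTop
        (nhds (lam ^ (-p)))) ∧
      ∃ K₀ > 0, ∀ K > K₀, g₁ K ≤ C K ∧ C K ≤ g₂ K :=
  weak_pareto_of_log_limit_general C p hCpos hlim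
end

section
/- Let C : (0,∞) → (0,∞) and suppose lim_{K→∞} (log K)⁻¹ log(1/C(K)) = 0. Then there exists a slowly varying function g₁ and K₀ > 0 such that g₁(K) ≤ C(K) for all K > K₀. -/
open Filter Real

namespace SVaux

/-- Auxiliary: ψ u = ⨅ n, (U n / 2 + u / (n+1)). -/
noncomputable def psi (U : ℕ → ℝ) (u : ℝ) : ℝ := ⨅ n : ℕ, (U n / 2 + u / (n + 1))

lemma bdd (U : ℕ → ℝ) (hU1 : ∀ n, 1 ≤ U n) (u : ℝ) :
    BddBelow (Set.range fun n : ℕ => U n / 2 + u / (n + 1)) := by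
  refine ⟨1/2 - |u|, ?_⟩
  rintro x ⟨n, rfl⟩
  have h1 : (1:ℝ)/2 ≤ U n / 2 := by linarith [hU1 n]
  have h2 : -|u| ≤ u / (n + 1) := by
    have hn : (1:ℝ) ≤ (n:ℝ) + 1 := by
      have : (0:ℝ) ≤ (n:ℝ) := Nat.cast_nonneg n
      linarith
    have := abs_div u ((n:ℝ)+1)
    have h3 : |u / ((n:ℝ)+1)| ≤ |u| := by
      rw [abs_div, abs_of_pos (by positivity : (0:ℝ) < (n:ℝ)+1)]
      exact div_le_self (abs_nonneg u) hn
    linarith [neg_abs_le (u / ((n:ℝ)+1)), (abs_le.mp h3).1]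
  linarith

lemma psi_le (U : ℕ → ℝ) (hU1 : ∀ n, 1 ≤ U n) (u : ℝ) (n : ℕ) :
    psi U u ≤ U n / 2 + u / (n + 1) :=
  ciInf_le (bdd U hU1 u) n

lemma psi_mono (U : ℕ → ℝ) (hU1 : ∀ n, 1 ≤ U n) {u v : ℝ} (huv : u ≤ v) :
    psi U u ≤ psi U v := by
  refine le_ciInf fun n => (psi_le U hU1 u n).trans ?_
  have : u / ((n:ℝ) + 1) ≤ v / ((n:ℝ) + 1) := by gcongr
  linarith

lemma key (U : ℕ → ℝ) (hU1 : ∀ n, 1 ≤ U n) (c : ℝ) (hc : 0 ≤ c) :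
    Tendsto (fun u => psi U (u + c) - psi U u) atTop (nhds 0) := by
  rw [Metric.tendsto_atTop]
  intro ε hε
  obtain ⟨N, hN⟩ := exists_nat_gt (2 * c / ε)
  have hNc : c / ((N:ℝ) + 1) < ε / 2 := by
    rw [div_lt_iff₀ (by positivity : (0:ℝ) < (N:ℝ)+1)]
    have h2 : 2 * c < (N:ℝ) * ε := (div_lt_iff₀ hε).mp hN
    nlinarith
  set M : ℕ := 2 * N + 2 with hM
  refine ⟨((N:ℝ) + 1) * (U M + ε), fun u hu => ?_⟩
  have hUM : (1:ℝ) ≤ U M := hU1 M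
  have hu0 : 0 ≤ u := le_trans (by positivity) hu
  -- near-minimizer
  obtain ⟨n, hn⟩ := exists_lt_of_ciInf_lt
    (show psi U u < psi U u + ε / 2 by linarith)
  -- n must be > N
  have hnN : N < n := by
    by_contra h
    push_neg at h
    have h1 : u / ((N:ℝ) + 1) ≤ u / ((n:ℝ) + 1) := by
      gcongr
    have h2 : psi U u ≤ U M / 2 + u / ((M:ℝ) + 1) := psi_le U hU1 u M
    have h3 : u / ((M:ℝ) + 1) ≤ u / (2 * ((N:ℝ) + 1)) := by
      gcongr
      · push_cast [hM]; linarith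
    have h4 : 0 ≤ U n / 2 := by linarith [hU1 n]
    have h5 : u / ((N:ℝ) + 1) = 2 * (u / (2 * ((N:ℝ) + 1))) := by
      field_simp
    have h6 : u / (2 * ((N:ℝ) + 1)) < U M / 2 + ε / 2 := by
      have := hn
      nlinarith [h1, h2, h3, h4]
    have : u < ((N:ℝ) + 1) * (U M + ε) := by
      rw [div_lt_iff₀ (by positivity : (0:ℝ) < 2 * ((N:ℝ)+1))] at h6
      nlinarith
    linarith
  -- conclude
  have hstep : psi U (u + c) ≤ U n / 2 + u / ((n:ℝ) + 1) + c / ((n:ℝ) + 1) := by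
    have := psi_le U hU1 (u + c) n
    rw [add_div] at this
    linarith
  have hcn : c / ((n:ℝ) + 1) ≤ c / ((N:ℝ) + 1) := by
    gcongr
  have hmono : psi U u ≤ psi U (u + c) := psi_mono U hU1 (by linarith)
  have : psi U (u + c) - psi U u < ε := by linarith
  rw [Real.dist_eq, sub_zero, abs_of_nonneg (by linarith)]
  exact this

lemma key_all (U : ℕ → ℝ) (hU1 : ∀ n, 1 ≤ U n) (c : ℝ) :
    Tendsto (fun u => psi U (u + c) - psi U u) atTop (nhds 0) := by
  rcases le_or_gt 0 c with hc | hc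
  · exact key U hU1 c hc
  · have h := (key U hU1 (-c) (by linarith)).comp
      (tendsto_atTop_add_const_right atTop c tendsto_id)
    have h2 : (fun u => psi U (u + c + -c) - psi U (u + c)) =
        fun u => psi U u - psi U (u + c) := by
      funext u; ring_nf
    rw [show (0:ℝ) = -0 by ring] at h ⊢
    simpa [Function.comp, h2] using h.neg

end SVaux

theorem slowly_varying_minorant_of_log_limit_zero (C : ℝ → ℝ)
    (hCpos : ∀ K > 0, 0 < C K)
    (hlim : Filter.Tendsto (fun K => (Real.log K)⁻¹ * Real.log (1 / C K))
      Filter.atTop (nhds 0)) :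
    ∃ g₁ : ℝ → ℝ, (∀ x > 0, 0 < g₁ x) ∧
      (∀ lam > 0, Filter.Tendsto (fun x => g₁ (lam * x) / g₁ x) Filter.atTop (nhds 1)) ∧
      ∃ K₀ > 0, ∀ K > K₀, g₁ K ≤ C K := by
  classical
  set f : ℝ → ℝ := fun u => Real.log (1 / C (Real.exp u)) with hf
  have h2 : Tendsto (fun u => u⁻¹ * f u) atTop (nhds 0) := by
    have h := hlim.comp Real.tendsto_exp_atTop
    refine h.congr fun u => ?_
    simp [hf, Real.log_exp, Function.comp]
  -- thresholds
  have hUex : ∀ n : ℕ, ∃ U : ℝ, 1 ≤ U ∧ ∀ u ≥ U, f u ≤ u / (2 * ((n:ℝ) + 1)) := by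
    intro n
    have hε : (0:ℝ) < 1 / (2 * ((n:ℝ) + 1)) := by positivity
    have h3 : ∀ᶠ u in atTop, |u⁻¹ * f u| < 1 / (2 * ((n:ℝ) + 1)) := by
      have h := Metric.tendsto_nhds.mp h2 _ hε
      simp only [Real.dist_eq, sub_zero] at h
      exact h
    have h4 := h3.and (eventually_ge_atTop (1:ℝ))
    rw [eventually_atTop] at h4
    obtain ⟨a, ha⟩ := h4
    refine ⟨max a 1, le_max_right a 1, fun u hu => ?_⟩
    obtain ⟨habs, hu1⟩ := ha u (le_trans (le_max_left a 1) hu)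
    have hupos : (0:ℝ) < u := lt_of_lt_of_le one_pos hu1
    have : u⁻¹ * f u ≤ 1 / (2 * ((n:ℝ) + 1)) := le_of_lt (lt_of_abs_lt habs)
    calc f u = u * (u⁻¹ * f u) := by field_simp
      _ ≤ u * (1 / (2 * ((n:ℝ) + 1))) := by
          exact mul_le_mul_of_nonneg_left this hupos.le
      _ = u / (2 * ((n:ℝ) + 1)) := by ring
  choose U hU1 hU2 using hUex
  -- ψ dominates f beyond U 0
  have hpsi_ge : ∀ u, U 0 ≤ u → f u ≤ SVaux.psi U u := by
    intro u hu
    have hu1 : (1:ℝ) ≤ u := le_trans (hU1 0) hu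
    refine le_ciInf fun n => ?_
    rcases le_or_gt (U n) u with h | h
    · have h1 : f u ≤ u / (2 * ((n:ℝ) + 1)) := hU2 n u h
      have h2 : u / (2 * ((n:ℝ) + 1)) ≤ u / ((n:ℝ) + 1) := by
        gcongr
        linarith
      have h3 : (0:ℝ) ≤ U n / 2 := by linarith [hU1 n]
      linarith
    · have h1 : f u ≤ u / (2 * ((0:ℕ):ℝ) + 2) := by
        have := hU2 0 u hu
        simpa using this
      have h2 : u / 2 ≤ U n / 2 := by
        rw [div_le_div_iff₀ (by norm_num) (by norm_num)]
        nlinarith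
      have h3 : (0:ℝ) ≤ u / ((n:ℝ) + 1) := by positivity
      have h4 : u / (2 * ((0:ℕ):ℝ) + 2) = u / 2 := by norm_num
      push_cast at h4 ⊢
      linarith
  -- the function
  refine ⟨fun x => Real.exp (-(SVaux.psi U (Real.log x))), fun x _ => Real.exp_pos _,
    ?_, Real.exp (U 0), Real.exp_pos _, ?_⟩
  · intro lam hlam
    have hkey := SVaux.key_all U hU1 (Real.log lam)
    have hcomp : Tendsto
        (fun x => SVaux.psi U (Real.log x + Real.log lam) - SVaux.psi U (Real.log x))
        atTop (nhds 0) := hkey.comp Real.tendsto_log_atTop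
    have hcont : Tendsto (fun t : ℝ => Real.exp (-t)) (nhds 0) (nhds 1) := by
      have : Continuous fun t : ℝ => Real.exp (-t) := by continuity
      simpa using this.tendsto 0
    have := hcont.comp hcomp
    refine this.congr' ?_
    filter_upwards [eventually_gt_atTop (0:ℝ)] with x hx
    have hlx : Real.log (lam * x) = Real.log lam + Real.log x :=
      Real.log_mul (ne_of_gt hlam) (ne_of_gt hx)
    simp only [Function.comp]
    rw [← Real.exp_sub]
    congr 1
    rw [hlx]
    ring_nf
  · intro K hK
    have hK0 : (0:ℝ) < K := lt_trans (Real.exp_pos _) hK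
    have hlogK : U 0 ≤ Real.log K :=
      ((Real.lt_log_iff_exp_lt hK0).mpr hK).le
    have h1 : f (Real.log K) ≤ SVaux.psi U (Real.log K) := hpsi_ge _ hlogK
    have h2 : f (Real.log K) = -Real.log (C K) := by
      rw [hf]
      simp [Real.exp_log hK0, Real.log_div, one_div, Real.log_inv]
    have h3 : Real.exp (-(SVaux.psi U (Real.log K))) ≤ Real.exp (Real.log (C K)) := by
      apply Real.exp_le_exp.mpr
      rw [h2] at h1
      linarith
    rwa [Real.exp_log (hCpos K hK0)] at h3
end

section
/- Let h : (x₀,∞) → (0,∞) be regularly varying at infinity with index -1 and integrable at infinity. Then the function g(x) = ∫ₓ^∞ h(u) du is slowly varying and ∫ₓ^∞ h(u) du / (x·h(x)) → ∞ as x → ∞. -/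
/-!
Write `G x = ∫_{(x,∞)} h`. The substitution `u = x t` gives
`G x / (x h x) = ∫_{(1,∞)} h (x t) / h x dt`, whose integrand tends to `t⁻¹` pointwise; as `t⁻¹` is
not integrable on `(1,∞)`, Fatou's lemma forces the ratio to `∞`. Hence eventually
`u h u ≤ δ G u ≤ δ G x` for all `u ≥ x`, and integrating `h ≤ δ G x / u` over `[x, λx]` gives
`0 ≤ G x - G (λx) ≤ δ log λ · G x` for `λ ≥ 1`; the case `λ < 1` follows by inverting at `λx`.
-/

open MeasureTheory Set Filter Topology Real

namespace MeasureTheory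

variable {α ι : Type*} [MeasurableSpace α] {μ : Measure α}

theorem lintegral_liminf_le_of_eventually_aemeasurable {l : Filter ι} [l.IsCountablyGenerated]
    {F : ι → α → ENNReal} (hF : ∀ᶠ i in l, AEMeasurable (F i) μ) :
    ∫⁻ a, liminf (fun i => F i a) l ∂μ ≤ liminf (fun i => ∫⁻ a, F i a ∂μ) l := by
  classical
  set G : ι → α → ENNReal := fun i => if AEMeasurable (F i) μ then F i else 0
  have hGF : ∀ᶠ i in l, G i = F i := hF.mono fun i hi => if_pos hi
  have hG : ∀ i, AEMeasurable (G i) μ := fun i => by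
    unfold G
    split_ifs with hi
    exacts [hi, aemeasurable_const]
  calc ∫⁻ a, liminf (fun i => F i a) l ∂μ
      = ∫⁻ a, liminf (fun i => G i a) l ∂μ :=
        lintegral_congr fun a => liminf_congr (hGF.mono fun i hi => by rw [hi])
    _ ≤ liminf (fun i => ∫⁻ a, G i a ∂μ) l := lintegral_liminf_le' hG
    _ = liminf (fun i => ∫⁻ a, F i a ∂μ) l := liminf_congr (hGF.mono fun i hi => by rw [hi])

theorem tendsto_lintegral_top_of_tendsto {l : Filter ι} [l.IsCountablyGenerated] [l.NeBot]
    {F : ι → α → ENNReal} {f : α → ENNReal} (hF : ∀ᶠ i in l, AEMeasurable (F i) μ)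
    (hlim : ∀ᵐ a ∂μ, Tendsto (fun i => F i a) l (𝓝 (f a))) (hf : ∫⁻ a, f a ∂μ = ⊤) :
    Tendsto (fun i => ∫⁻ a, F i a ∂μ) l (𝓝 ⊤) := by
  refine tendsto_of_le_liminf_of_limsup_le ?_ le_top
  calc ⊤ = ∫⁻ a, f a ∂μ := hf.symm
    _ = ∫⁻ a, liminf (fun i => F i a) l ∂μ :=
      lintegral_congr_ae (hlim.mono fun a ha => ha.liminf_eq.symm)
    _ ≤ _ := lintegral_liminf_le_of_eventually_aemeasurable hF

end MeasureTheory

theorem lintegral_Ioi_one_ofReal_inv : ∫⁻ t in Ioi (1 : ℝ), ENNReal.ofReal t⁻¹ = ⊤ := by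
  by_contra hfin
  refine not_integrableOn_Ioi_inv ((lintegral_ofReal_ne_top_iff_integrable
    measurable_inv.aestronglyMeasurable ?_).1 hfin)
  filter_upwards [ae_restrict_mem measurableSet_Ioi] with t (ht : 1 < t)
  exact inv_nonneg.2 (zero_le_one.trans ht.le)

theorem intervalIntegral.integral_le_mul_log_of_mul_le {f : ℝ → ℝ} {a b c : ℝ}
    (ha : 0 < a) (hab : a ≤ b) (hf : IntervalIntegrable f volume a b)
    (hbound : ∀ u ∈ Icc a b, u * f u ≤ c) :
    ∫ u in a..b, f u ≤ c * log (b / a) := by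
  have hinv : IntervalIntegrable (fun u => c * u⁻¹) volume a b :=
    (intervalIntegrable_inv_iff.2 (Or.inr (notMem_uIcc_of_lt ha (ha.trans_le hab)))).const_mul c
  calc ∫ u in a..b, f u ≤ ∫ u in a..b, c * u⁻¹ :=
        intervalIntegral.integral_mono_on hab hf hinv fun u hu => by
          rw [← div_eq_mul_inv, le_div_iff₀ (ha.trans_le hu.1), mul_comm]
          exact hbound u hu
    _ = c * log (b / a) := by
        rw [intervalIntegral.integral_const_mul, integral_inv_of_pos ha (ha.trans_le hab)]

section TailIntegral

variable {h : ℝ → ℝ} {x₀ : ℝ}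

theorem setIntegral_Ioi_pos (hpos : ∀ x > x₀, 0 < h x) (hint : IntegrableOn h (Ioi x₀))
    {a : ℝ} (ha : x₀ < a) : 0 < ∫ u in Ioi a, h u := by
  have hnonneg : 0 ≤ᵐ[volume.restrict (Ioi a)] h := by
    filter_upwards [ae_restrict_mem measurableSet_Ioi] with u (hu : a < u)
    exact (hpos u (ha.trans hu)).le
  rw [setIntegral_pos_iff_support_of_nonneg_ae hnonneg (hint.mono_set (Ioi_subset_Ioi ha.le))]
  have hsupp : Ioi a ⊆ Function.support h ∩ Ioi a := fun u hu =>
    ⟨(hpos u (ha.trans hu)).ne', hu⟩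
  exact (measure_mono hsupp).trans_lt' (by simp)

theorem setIntegral_Ioi_le_setIntegral_Ioi (hpos : ∀ x > x₀, 0 < h x)
    (hint : IntegrableOn h (Ioi x₀)) {a b : ℝ} (ha : x₀ < a) (hab : a ≤ b) :
    ∫ u in Ioi b, h u ≤ ∫ u in Ioi a, h u := by
  have hsub := intervalIntegral.integral_Ioi_sub_Ioi (hint.mono_set (Ioi_subset_Ioi ha.le)) hab
  have : 0 ≤ ∫ u in a..b, h u :=
    intervalIntegral.integral_nonneg hab fun u hu => (hpos u (ha.trans_le hu.1)).le
  linarith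

theorem ofReal_setIntegral_Ioi_div_eq_lintegral (hpos : ∀ x > x₀, 0 < h x)
    (hint : IntegrableOn h (Ioi x₀)) {x : ℝ} (hx : 0 < x) (hx₀ : x₀ < x) :
    ENNReal.ofReal ((∫ u in Ioi x, h u) / (x * h x)) =
      ∫⁻ t in Ioi (1 : ℝ), ENNReal.ofReal (h (x * t) / h x) := by
  have hscaled : IntegrableOn (fun t => h (x * t) / h x) (Ioi 1) :=
    ((integrableOn_Ioi_comp_mul_left_iff h 1 hx).2
      (by simpa using hint.mono_set (Ioi_subset_Ioi hx₀.le))).div_const _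
  have hnonneg : 0 ≤ᵐ[volume.restrict (Ioi (1 : ℝ))] fun t => h (x * t) / h x := by
    filter_upwards [ae_restrict_mem measurableSet_Ioi] with t (ht : 1 < t)
    exact div_nonneg (hpos _ (by nlinarith)).le (hpos x hx₀).le
  rw [← ofReal_integral_eq_lintegral_ofReal hscaled hnonneg, integral_div,
    integral_comp_mul_left_Ioi h 1 hx, mul_one, smul_eq_mul, inv_mul_eq_div, div_div]

theorem tendsto_setIntegral_Ioi_div_mul_atTop (hpos : ∀ x > x₀, 0 < h x)
    (hrv : ∀ lam > 0, Tendsto (fun x => h (lam * x) / h x) atTop (𝓝 (lam ^ (-1 : ℝ))))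
    (hint : IntegrableOn h (Ioi x₀)) :
    Tendsto (fun x => (∫ u in Ioi x, h u) / (x * h x)) atTop atTop := by
  have hlarge : ∀ᶠ x in atTop, 0 < x ∧ x₀ < x :=
    (eventually_gt_atTop 0).and (eventually_gt_atTop x₀)
  have hmeas : ∀ᶠ x in atTop, AEMeasurable (fun t => ENNReal.ofReal (h (x * t) / h x))
      (volume.restrict (Ioi (1 : ℝ))) := hlarge.mono fun x ⟨hx, hx₀⟩ =>
    ENNReal.measurable_ofReal.comp_aemeasurable
      (((integrableOn_Ioi_comp_mul_left_iff h 1 hx).2 (by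
        simpa using hint.mono_set (Ioi_subset_Ioi hx₀.le))).div_const _).aemeasurable
  have hlim : ∀ᵐ t ∂volume.restrict (Ioi (1 : ℝ)),
      Tendsto (fun x => ENNReal.ofReal (h (x * t) / h x)) atTop (𝓝 (ENNReal.ofReal t⁻¹)) := by
    filter_upwards [ae_restrict_mem measurableSet_Ioi] with t (ht : 1 < t)
    simpa only [mul_comm _ t, rpow_neg_one] using
      ENNReal.tendsto_ofReal (hrv t (zero_lt_one.trans ht))
  rw [← ENNReal.tendsto_ofReal_nhds_top]
  refine (tendsto_lintegral_top_of_tendsto hmeas hlim lintegral_Ioi_one_ofReal_inv).congr' ?_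
  filter_upwards [hlarge] with x ⟨hx, hx₀⟩
  exact (ofReal_setIntegral_Ioi_div_eq_lintegral hpos hint hx hx₀).symm

theorem setIntegral_Ioi_sub_le_mul_log (hpos : ∀ x > x₀, 0 < h x)
    (hint : IntegrableOn h (Ioi x₀)) {x lam δ : ℝ} (hx : 0 < x) (hx₀ : x₀ < x)
    (hlam : 1 ≤ lam) (hδ : 0 ≤ δ) (hsmall : ∀ u ≥ x, u * h u ≤ δ * ∫ v in Ioi u, h v) :
    (∫ u in Ioi x, h u) - ∫ u in Ioi (lam * x), h u ≤ δ * (∫ u in Ioi x, h u) * log lam := by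
  have hxlam : x ≤ lam * x := le_mul_of_one_le_left hx.le hlam
  have hlog_eq : log (lam * x / x) = log lam := by rw [mul_div_cancel_right₀ lam hx.ne']
  rw [intervalIntegral.integral_Ioi_sub_Ioi (hint.mono_set (Ioi_subset_Ioi hx₀.le)) hxlam,
    ← hlog_eq]
  refine intervalIntegral.integral_le_mul_log_of_mul_le hx hxlam
    ((intervalIntegrable_iff_integrableOn_Ioc_of_le hxlam).2
      (hint.mono_set fun u hu => hx₀.trans hu.1)) fun u hu => ?_
  calc u * h u ≤ δ * ∫ v in Ioi u, h v := hsmall u hu.1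
    _ ≤ δ * ∫ v in Ioi x, h v :=
      mul_le_mul_of_nonneg_left (setIntegral_Ioi_le_setIntegral_Ioi hpos hint hx₀ hu.1) hδ

theorem tendsto_setIntegral_Ioi_const_mul_div_of_one_le (hpos : ∀ x > x₀, 0 < h x)
    (hint : IntegrableOn h (Ioi x₀))
    (htail : Tendsto (fun x => (∫ u in Ioi x, h u) / (x * h x)) atTop atTop)
    {lam : ℝ} (hlam : 1 ≤ lam) :
    Tendsto (fun x => (∫ u in Ioi (lam * x), h u) / ∫ u in Ioi x, h u) atTop (𝓝 1) := by
  rw [tendsto_order]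
  refine ⟨fun a ha => ?_, fun b hb => ?_⟩
  · set δ := (1 - a) / (log lam + 1)
    have hlog : 0 ≤ log lam := log_nonneg hlam
    have hδ : 0 < δ := div_pos (sub_pos.2 ha) (by linarith)
    have hδlog : δ * log lam < 1 - a := by
      have : δ * (log lam + 1) = 1 - a := div_mul_cancel₀ _ (by linarith)
      linarith
    have hsmall : ∀ᶠ u in atTop, u * h u ≤ δ * ∫ v in Ioi u, h v := by
      filter_upwards [htail.eventually_ge_atTop δ⁻¹, eventually_gt_atTop 0,
        eventually_gt_atTop x₀] with u hu hu0 hux₀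
      rwa [le_div_iff₀ (mul_pos hu0 (hpos u hux₀)), inv_mul_le_iff₀ hδ] at hu
    filter_upwards [eventually_forall_ge_atTop.2 hsmall, eventually_gt_atTop 0,
      eventually_gt_atTop x₀] with x hx hx0 hxx₀
    have hG := setIntegral_Ioi_pos hpos hint hxx₀
    have hdiff := setIntegral_Ioi_sub_le_mul_log hpos hint hx0 hxx₀ hlam hδ.le hx
    rw [lt_div_iff₀ hG]
    nlinarith [mul_lt_mul_of_pos_right hδlog hG]
  · filter_upwards [eventually_gt_atTop 0, eventually_gt_atTop x₀] with x hx0 hxx₀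
    refine lt_of_le_of_lt ?_ hb
    exact (div_le_one (setIntegral_Ioi_pos hpos hint hxx₀)).2
      (setIntegral_Ioi_le_setIntegral_Ioi hpos hint hxx₀ (le_mul_of_one_le_left hx0.le hlam))

theorem tendsto_setIntegral_Ioi_const_mul_div (hpos : ∀ x > x₀, 0 < h x)
    (hint : IntegrableOn h (Ioi x₀))
    (htail : Tendsto (fun x => (∫ u in Ioi x, h u) / (x * h x)) atTop atTop)
    {lam : ℝ} (hlam : 0 < lam) :
    Tendsto (fun x => (∫ u in Ioi (lam * x), h u) / ∫ u in Ioi x, h u) atTop (𝓝 1) := by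
  rcases le_or_gt 1 lam with hlam1 | hlam1
  · exact tendsto_setIntegral_Ioi_const_mul_div_of_one_le hpos hint htail hlam1
  · have hinv := (tendsto_setIntegral_Ioi_const_mul_div_of_one_le hpos hint htail
      (one_le_inv₀ hlam |>.2 hlam1.le)).comp (tendsto_id.const_mul_atTop hlam)
    simpa only [Function.comp_def, id, inv_mul_cancel_left₀ hlam.ne', inv_div, inv_one]
      using hinv.inv₀ one_ne_zero

end TailIntegral

theorem karamata_index_neg_one (h : ℝ → ℝ) (x₀ : ℝ)
    (hpos : ∀ x > x₀, 0 < h x)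
    (hrv : ∀ lam > 0, Filter.Tendsto (fun x => h (lam * x) / h x) Filter.atTop
      (nhds (lam ^ (-1 : ℝ))))
    (hint : MeasureTheory.IntegrableOn h (Set.Ioi x₀)) :
    (∀ lam > 0, Filter.Tendsto
      (fun x => (∫ u in Set.Ioi (lam * x), h u) / ∫ u in Set.Ioi x, h u)
      Filter.atTop (nhds 1)) ∧
    Filter.Tendsto (fun x => (∫ u in Set.Ioi x, h u) / (x * h x))
      Filter.atTop Filter.atTop := by
  have htail := tendsto_setIntegral_Ioi_div_mul_atTop hpos hrv hint
  exact ⟨fun _ hlam => tendsto_setIntegral_Ioi_const_mul_div hpos hint htail hlam, htail⟩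
end

section
/- Let w : (0,∞) → (0,∞) be increasing with w(y)/log y → ∞ as y → ∞, and let F̄ : (0,∞) → [0,∞) be a complementary distribution function of a nonnegative random variable X (so F̄(y) = P(X ≥ y)). Define p̂_w = sup{ p ≥ 0 : ∫₀^∞ F̄(u) e^{p w(u)} du < ∞ } and p̃_w = sup{ p ≥ 0 : E[e^{p w(X)}] < ∞ }. Then p̃_w ≤ p̂_w. -/
/-!
A Chernoff bound gives `e^{p w(u)} P(X ≥ u) ≤ E[e^{p w(X)}]` for every `u > 0`. For `q < p`,
the growth `w(u) / log u → ∞` makes `e^{q w(u)} ≤ u⁻² e^{p w(u)}` for large `u`, so the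
integrand `e^{q w(u)} P(X ≥ u)` is dominated by `u⁻² E[e^{p w(X)}]` on a tail `(M, ∞)`, while on
`(0, M]` it is at most `e^{q w(M)}` by monotonicity of `w`. Hence every exponent below `p̃_w`
is admissible for `p̂_w`.
-/

open Filter MeasureTheory Set

lemma eventually_exp_mul_le_rpow_neg_mul_exp {w : ℝ → ℝ}
    (hw : Tendsto (fun y => w y / Real.log y) atTop atTop) {q p : ℝ} (hqp : q < p) (s : ℝ) :
    ∀ᶠ u in atTop, Real.exp (q * w u) ≤ u ^ (-s) * Real.exp (p * w u) := by
  filter_upwards [hw.eventually_ge_atTop (s / (p - q)), eventually_gt_atTop 1]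
    with u hwu hu
  have hlog : 0 < Real.log u := Real.log_pos hu
  have hsw : s * Real.log u ≤ (p - q) * w u := by
    rw [div_le_div_iff₀ (sub_pos.2 hqp) hlog] at hwu
    linarith
  rw [Real.rpow_def_of_pos (by linarith), ← Real.exp_add]
  exact Real.exp_le_exp.2 (by linarith)

section TailBounds

variable {Ω : Type*} [MeasurableSpace Ω] {μ : Measure Ω} {X : Ω → ℝ} {w : ℝ → ℝ}

lemma ofReal_exp_mul_measure_le_lintegral (hX : Measurable X) (hw : MonotoneOn w (Ioi 0))
    {p : ℝ} (hp : 0 ≤ p) {u : ℝ} (hu : 0 < u) :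
    ENNReal.ofReal (Real.exp (p * w u)) * μ {ω | u ≤ X ω}
      ≤ ∫⁻ ω, ENNReal.ofReal (Real.exp (p * w (X ω))) ∂μ :=
  calc ENNReal.ofReal (Real.exp (p * w u)) * μ {ω | u ≤ X ω}
      = ∫⁻ _ in {ω | u ≤ X ω}, ENNReal.ofReal (Real.exp (p * w u)) ∂μ :=
        (setLIntegral_const _ _).symm
    _ ≤ ∫⁻ ω in {ω | u ≤ X ω}, ENNReal.ofReal (Real.exp (p * w (X ω))) ∂μ := by
        refine setLIntegral_mono' (hX measurableSet_Ici) fun ω (hω : u ≤ X ω) ↦ ?_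
        gcongr
        exact hw hu (hu.trans_le hω) hω
    _ ≤ _ := setLIntegral_le_lintegral _ _

lemma setLIntegral_Ioc_exp_mul_measure_lt_top [IsFiniteMeasure μ] (hw : MonotoneOn w (Ioi 0))
    {q : ℝ} (hq : 0 ≤ q) (M : ℝ) :
    ∫⁻ u in Ioc 0 M, ENNReal.ofReal (Real.exp (q * w u)) * μ {ω | u ≤ X ω} < ⊤ := by
  calc ∫⁻ u in Ioc 0 M, ENNReal.ofReal (Real.exp (q * w u)) * μ {ω | u ≤ X ω}
      ≤ ∫⁻ _ in Ioc 0 M, ENNReal.ofReal (Real.exp (q * w M)) * μ univ := by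
        refine setLIntegral_mono measurable_const fun u ⟨hu, huM⟩ ↦ ?_
        gcongr
        · exact hw hu (hu.trans_le huM) huM
        · exact subset_univ _
    _ < ⊤ := by
        rw [setLIntegral_const, Real.volume_Ioc]
        exact ENNReal.mul_lt_top (ENNReal.mul_lt_top ENNReal.ofReal_lt_top (measure_lt_top _ _))
          ENNReal.ofReal_lt_top

lemma exists_setLIntegral_Ioi_exp_mul_measure_lt_top (hX : Measurable X)
    (hw : MonotoneOn w (Ioi 0)) (hwlog : Tendsto (fun y => w y / Real.log y) atTop atTop)
    {q p : ℝ} (hp : 0 ≤ p) (hqp : q < p)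
    (hfin : ∫⁻ ω, ENNReal.ofReal (Real.exp (p * w (X ω))) ∂μ < ⊤) :
    ∃ M > 0, ∫⁻ u in Ioi M, ENNReal.ofReal (Real.exp (q * w u)) * μ {ω | u ≤ X ω} < ⊤ := by
  obtain ⟨M, hM⟩ := eventually_atTop.1
    ((eventually_exp_mul_le_rpow_neg_mul_exp hwlog hqp 2).and (eventually_gt_atTop 0))
  refine ⟨max M 1, by positivity, ?_⟩
  set C := ∫⁻ ω, ENNReal.ofReal (Real.exp (p * w (X ω))) ∂μ
  have hdecay : Measurable fun u : ℝ ↦ ENNReal.ofReal (u ^ (-2 : ℝ)) :=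
    (measurable_id.pow_const _).ennreal_ofReal
  calc ∫⁻ u in Ioi (max M 1), ENNReal.ofReal (Real.exp (q * w u)) * μ {ω | u ≤ X ω}
      ≤ ∫⁻ u in Ioi (max M 1), ENNReal.ofReal (u ^ (-2 : ℝ)) * C := by
        refine setLIntegral_mono (hdecay.mul_const C) fun u hu ↦ ?_
        obtain ⟨hexp, hu0⟩ := hM u (le_max_left _ _ |>.trans hu.le)
        calc ENNReal.ofReal (Real.exp (q * w u)) * μ {ω | u ≤ X ω}
            ≤ ENNReal.ofReal (u ^ (-2 : ℝ)) * ENNReal.ofReal (Real.exp (p * w u))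
                * μ {ω | u ≤ X ω} := by
              rw [← ENNReal.ofReal_mul (by positivity)]
              gcongr
          _ ≤ ENNReal.ofReal (u ^ (-2 : ℝ)) * C := by
              rw [mul_assoc]
              gcongr
              exact ofReal_exp_mul_measure_le_lintegral hX hw hp hu0
    _ = (∫⁻ u in Ioi (max M 1), ENNReal.ofReal (u ^ (-2 : ℝ))) * C := lintegral_mul_const _ hdecay
    _ < ⊤ := ENNReal.mul_lt_top
        ((integrableOn_Ioi_rpow_of_lt (by norm_num) (by positivity)).lintegral_lt_top) hfin

lemma setLIntegral_Ioi_exp_mul_measure_lt_top [IsFiniteMeasure μ] (hX : Measurable X)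
    (hw : MonotoneOn w (Ioi 0)) (hwlog : Tendsto (fun y => w y / Real.log y) atTop atTop)
    {q p : ℝ} (hq : 0 ≤ q) (hqp : q < p)
    (hfin : ∫⁻ ω, ENNReal.ofReal (Real.exp (p * w (X ω))) ∂μ < ⊤) :
    ∫⁻ u in Ioi 0, ENNReal.ofReal (Real.exp (q * w u)) * μ {ω | u ≤ X ω} < ⊤ := by
  obtain ⟨M, hM, htail⟩ :=
    exists_setLIntegral_Ioi_exp_mul_measure_lt_top hX hw hwlog (hq.trans hqp.le) hqp hfin
  rw [← Ioc_union_Ioi_eq_Ioi hM.le, lintegral_union measurableSet_Ioi (Ioc_disjoint_Ioi le_rfl)]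
  exact ENNReal.add_lt_top.2 ⟨setLIntegral_Ioc_exp_mul_measure_lt_top hw hq M, htail⟩

end TailBounds

lemma sSup_ofReal_image_le_of_forall_lt {S T : Set ℝ}
    (h : ∀ p ∈ S, ∀ q, 0 ≤ q → q < p → q ∈ T) :
    sSup (ENNReal.ofReal '' S) ≤ sSup (ENNReal.ofReal '' T) := by
  refine sSup_le ?_
  rintro _ ⟨p, hp, rfl⟩
  refine le_of_forall_lt_imp_le_of_dense fun c hc ↦ ?_
  rw [← ENNReal.ofReal_toReal (hc.trans ENNReal.ofReal_lt_top).ne]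
  exact le_sSup ⟨_, h p hp _ ENNReal.toReal_nonneg (ENNReal.toReal_lt_of_lt_ofReal hc), rfl⟩

theorem ptilde_le_phat_general {Ω : Type*} [MeasurableSpace Ω] (μ : Measure Ω)
    [IsProbabilityMeasure μ] (X : Ω → ℝ) (hX : Measurable X)
    (w : ℝ → ℝ) (hwmono : StrictMonoOn w (Set.Ioi 0))
    (hwlog : Tendsto (fun y => w y / Real.log y) atTop atTop) :
    sSup (ENNReal.ofReal ''
        {p : ℝ | 0 ≤ p ∧ (∫⁻ ω, ENNReal.ofReal (Real.exp (p * w (X ω))) ∂μ) < ⊤})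
      ≤ sSup (ENNReal.ofReal ''
          {p : ℝ | 0 ≤ p ∧
            (∫⁻ u in Set.Ioi (0 : ℝ),
              ENNReal.ofReal (Real.exp (p * w u)) * μ {ω | u ≤ X ω}) < ⊤}) := by
  exact sSup_ofReal_image_le_of_forall_lt fun p ⟨_, hfin⟩ q hq hqp ↦
    ⟨hq, setLIntegral_Ioi_exp_mul_measure_lt_top hX hwmono.monotoneOn hwlog hq hqp hfin⟩

theorem ptilde_le_phat {Ω : Type*} [MeasurableSpace Ω] (μ : Measure Ω)
    [IsProbabilityMeasure μ] (X : Ω → ℝ) (hX : Measurable X) (hXnonneg : ∀ ω, 0 ≤ X ω)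
    (w : ℝ → ℝ) (hwpos : ∀ y > 0, 0 < w y) (hwmono : StrictMonoOn w (Set.Ioi 0))
    (hwlog : Tendsto (fun y => w y / Real.log y) atTop atTop) :
    sSup (ENNReal.ofReal ''
        {p : ℝ | 0 ≤ p ∧ (∫⁻ ω, ENNReal.ofReal (Real.exp (p * w (X ω))) ∂μ) < ⊤})
      ≤ sSup (ENNReal.ofReal ''
          {p : ℝ | 0 ≤ p ∧
            (∫⁻ u in Set.Ioi (0 : ℝ),
              ENNReal.ofReal (Real.exp (p * w u)) * μ {ω | u ≤ X ω}) < ⊤}) :=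
  ptilde_le_phat_general μ X hX w hwmono hwlog
end

section
/- Let w : (0,∞) → (0,∞) be increasing with w(y)/log y → ∞, and suppose that for every ε ∈ (0,1) there exists x_ε > 0 such that ∫₀^x e^{w(u)} du ≥ e^{(1-ε)w(x)} for all x > x_ε. Then for every p > 0 and every ε ∈ (0,p) there exists x_{p,ε} > 0 such that ∫₀^x e^{p w(u)} du ≥ e^{(p-ε)w(x)} for all x > x_{p,ε}. -/
/-!
For `p ≤ 1` write `e^w = e^{(1-p)w} e^{pw}` and bound the first factor by its value at the
right endpoint, so `∫₀^x e^{pw} ≥ e^{-(1-p)w(x)} ∫₀^x e^w ≥ e^{(p-ε)w(x)}`.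
For `p > 1` Hölder's inequality gives `(∫₀^x e^w)^p ≤ x^{p-1} ∫₀^x e^{pw}`; applying the hypothesis
with `ε / (2p)` leaves a loss `x^{p-1} = e^{(p-1) log x}`, which is eventually at most
`e^{(ε/2) w(x)}` because `w` grows faster than any multiple of `log`.
-/

open Filter MeasureTheory Set Real

theorem MonotoneOn.memLp_Ioc_of_nonneg {f : ℝ → ℝ} {a b : ℝ} (hf : MonotoneOn f (Ioc a b))
    (hf₀ : ∀ u ∈ Ioc a b, 0 ≤ f u) (q : ENNReal) : MemLp f q (volume.restrict (Ioc a b)) := by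
  have : IsFiniteMeasure (volume.restrict (Ioc a b)) := ⟨by simp [volume_Ioc]⟩
  refine MemLp.of_bound
    (aemeasurable_restrict_of_monotoneOn measurableSet_Ioc hf).aestronglyMeasurable (f b) ?_
  filter_upwards [ae_restrict_mem measurableSet_Ioc] with u hu
  rw [norm_of_nonneg (hf₀ u hu)]
  exact hf hu ⟨hu.1.trans_le hu.2, le_rfl⟩ hu.2

theorem MonotoneOn.exp_const_mul {w : ℝ → ℝ} {s : Set ℝ} (hw : MonotoneOn w s) {c : ℝ}
    (hc : 0 ≤ c) : MonotoneOn (fun u => exp (c * w u)) s :=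
  fun _ hu _ hv huv => exp_le_exp.2 (mul_le_mul_of_nonneg_left (hw hu hv huv) hc)

theorem rpow_integral_le_measureReal_univ_rpow_mul_integral_rpow {α : Type*} [MeasurableSpace α]
    {μ : Measure α} [IsFiniteMeasure μ] {p : ℝ} (hp : 1 < p) {f : α → ℝ} (hf₀ : 0 ≤ᵐ[μ] f)
    (hf : MemLp f (ENNReal.ofReal p) μ) :
    (∫ a, f a ∂μ) ^ p ≤ μ.real univ ^ (p - 1) * ∫ a, f a ^ p ∂μ := by
  have holder := integral_mul_le_Lp_mul_Lq_of_nonneg (Real.HolderConjugate.conjExponent hp) hf₀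
    (ae_of_all _ fun _ => zero_le_one) hf (memLp_const 1)
  simp only [mul_one, one_rpow, integral_const, smul_eq_mul] at holder
  have hI : 0 ≤ ∫ a, f a ^ p ∂μ := integral_nonneg_of_ae (hf₀.mono fun a ha => rpow_nonneg ha p)
  calc (∫ a, f a ∂μ) ^ p
      ≤ ((∫ a, f a ^ p ∂μ) ^ (1 / p) * μ.real univ ^ (1 / p.conjExponent)) ^ p :=
        rpow_le_rpow (integral_nonneg_of_ae hf₀) holder (by linarith)
    _ = μ.real univ ^ (p - 1) * ∫ a, f a ^ p ∂μ := by
        rw [mul_rpow (by positivity) (by positivity), ← rpow_mul hI, ← rpow_mul measureReal_nonneg,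
          one_div_mul_cancel (by positivity), rpow_one, Real.conjExponent, one_div_div,
          div_mul_cancel₀ _ (by positivity), mul_comm]

theorem exists_pos_forall_gt_of_eventually_atTop {P : ℝ → Prop} (h : ∀ᶠ x in atTop, P x) :
    ∃ x₀ > 0, ∀ x > x₀, P x := by
  obtain ⟨X, hX⟩ := eventually_atTop.1 h
  exact ⟨max X 1, by positivity, fun x hx => hX x ((le_max_left X 1).trans hx.le)⟩

section

variable {w : ℝ → ℝ}

theorem setIntegral_exp_le_exp_mul_setIntegral_exp_mul {a b p : ℝ} (hw : MonotoneOn w (Ioc a b))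
    (hp₀ : 0 ≤ p) (hp₁ : p ≤ 1) :
    ∫ u in Ioc a b, exp (w u) ≤ exp ((1 - p) * w b) * ∫ u in Ioc a b, exp (p * w u) := by
  have hint : IntegrableOn (fun u => exp (p * w u)) (Ioc a b) :=
    memLp_one_iff_integrable.1 <|
      (hw.exp_const_mul hp₀).memLp_Ioc_of_nonneg (fun _ _ => (exp_pos _).le) 1
  rw [← integral_const_mul]
  refine setIntegral_mono_on ?_ (hint.const_mul _) measurableSet_Ioc fun u hu => ?_
  · exact memLp_one_iff_integrable.1 <|
      (exp_monotone.comp_monotoneOn hw).memLp_Ioc_of_nonneg (fun _ _ => (exp_pos _).le) 1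
  · calc exp (w u) = exp ((1 - p) * w u) * exp (p * w u) := by rw [← exp_add]; ring_nf
      _ ≤ exp ((1 - p) * w b) * exp (p * w u) := by
        gcongr
        exact hw hu ⟨hu.1.trans_le hu.2, le_rfl⟩ hu.2

theorem rpow_setIntegral_exp_le {a b p : ℝ} (hab : a ≤ b) (hw : MonotoneOn w (Ioc a b))
    (hp : 1 < p) :
    (∫ u in Ioc a b, exp (w u)) ^ p ≤ (b - a) ^ (p - 1) * ∫ u in Ioc a b, exp (p * w u) := by
  have : IsFiniteMeasure (volume.restrict (Ioc a b)) := ⟨by simp [volume_Ioc]⟩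
  have h := rpow_integral_le_measureReal_univ_rpow_mul_integral_rpow hp
    (ae_of_all _ fun u => (exp_pos (w u)).le)
    ((exp_monotone.comp_monotoneOn hw).memLp_Ioc_of_nonneg (fun _ _ => (exp_pos _).le) _)
  simpa only [measureReal_restrict_apply_univ, volume_real_Ioc_of_le hab, ← exp_mul,
    mul_comm _ p] using h

theorem eventually_const_mul_log_le (hw : Tendsto (fun y => w y / log y) atTop atTop) (c : ℝ) :
    ∀ᶠ x in atTop, c * log x ≤ w x := by
  filter_upwards [hw.eventually_ge_atTop c, eventually_gt_atTop 1] with x hx hx₁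
  exact (le_div_iff₀ (log_pos hx₁)).1 hx

theorem eventually_exp_mul_le_setIntegral_exp_mul_of_le_one {p ε : ℝ}
    (hw : MonotoneOn w (Ioi 0)) (hp₀ : 0 ≤ p) (hp₁ : p ≤ 1)
    (hlow : ∀ᶠ x in atTop, exp ((1 - ε) * w x) ≤ ∫ u in Ioc 0 x, exp (w u)) :
    ∀ᶠ x in atTop, exp ((p - ε) * w x) ≤ ∫ u in Ioc 0 x, exp (p * w u) := by
  filter_upwards [hlow] with x hx
  have h := hx.trans <|
    setIntegral_exp_le_exp_mul_setIntegral_exp_mul (hw.mono Ioc_subset_Ioi_self) hp₀ hp₁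
  rwa [show (1 - ε) * w x = (1 - p) * w x + (p - ε) * w x by ring, exp_add,
    mul_le_mul_iff_right₀ (exp_pos _)] at h

theorem eventually_exp_mul_le_setIntegral_exp_mul_of_one_lt {p ε : ℝ}
    (hw : MonotoneOn w (Ioi 0)) (hwlog : Tendsto (fun y => w y / log y) atTop atTop)
    (hp : 1 < p) (hε : 0 < ε)
    (hlow : ∀ᶠ x in atTop, exp ((1 - ε / (2 * p)) * w x) ≤ ∫ u in Ioc 0 x, exp (w u)) :
    ∀ᶠ x in atTop, exp ((p - ε) * w x) ≤ ∫ u in Ioc 0 x, exp (p * w u) := by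
  filter_upwards [hlow, eventually_const_mul_log_le hwlog (2 * (p - 1) / ε),
    eventually_gt_atTop 0] with x hx hlog hx₀
  have hpow : exp ((1 - ε / (2 * p)) * w x) ^ p ≤ x ^ (p - 1) * ∫ u in Ioc 0 x, exp (p * w u) :=
    calc _ ≤ (∫ u in Ioc 0 x, exp (w u)) ^ p := rpow_le_rpow (exp_pos _).le hx (by linarith)
      _ ≤ _ := by
        simpa only [sub_zero] using rpow_setIntegral_exp_le hx₀.le (hw.mono Ioc_subset_Ioi_self) hp
  rw [← exp_mul, rpow_def_of_pos hx₀, ← div_le_iff₀' (exp_pos _), ← exp_sub] at hpow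
  refine le_trans (exp_le_exp.2 ?_) hpow
  have hloss : (p - 1) * log x ≤ ε / 2 * w x := by
    have := mul_le_mul_of_nonneg_left hlog (by positivity : 0 ≤ ε / 2)
    rwa [← mul_assoc, show ε / 2 * (2 * (p - 1) / ε) = p - 1 by field_simp] at this
  have hexp : (1 - ε / (2 * p)) * w x * p = p * w x - ε / 2 * w x := by field_simp
  linarith

end

theorem integral_exp_pw_lower_bound_general (w : ℝ → ℝ)
    (hwmono : StrictMonoOn w (Set.Ioi 0))
    (hwlog : Tendsto (fun y => w y / Real.log y) atTop atTop)
    (hlow : ∀ ε ∈ Set.Ioo (0 : ℝ) 1, ∃ xε > 0, ∀ x > xε,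
      Real.exp ((1 - ε) * w x) ≤ ∫ u in Set.Ioc 0 x, Real.exp (w u)) :
    ∀ p > 0, ∀ ε, 0 < ε → ε < p → ∃ xpε > 0, ∀ x > xpε,
      Real.exp ((p - ε) * w x) ≤ ∫ u in Set.Ioc 0 x, Real.exp (p * w u) := by
  intro p hp ε hε hεp
  have hlow_atTop (δ : ℝ) (hδ : δ ∈ Ioo (0 : ℝ) 1) :
      ∀ᶠ x in atTop, exp ((1 - δ) * w x) ≤ ∫ u in Ioc 0 x, exp (w u) :=
    let ⟨xδ, _, h⟩ := hlow δ hδ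
    (eventually_gt_atTop xδ).mono h
  apply exists_pos_forall_gt_of_eventually_atTop
  rcases le_or_gt p 1 with hp₁ | hp₁
  · exact eventually_exp_mul_le_setIntegral_exp_mul_of_le_one hwmono.monotoneOn hp.le hp₁
      (hlow_atTop ε ⟨hε, hεp.trans_le hp₁⟩)
  · refine eventually_exp_mul_le_setIntegral_exp_mul_of_one_lt hwmono.monotoneOn hwlog hp₁ hε
      (hlow_atTop _ ⟨by positivity, ?_⟩)
    rw [div_lt_one (by positivity)]
    linarith

theorem integral_exp_pw_lower_bound (w : ℝ → ℝ)
    (hwpos : ∀ y > 0, 0 < w y) (hwmono : StrictMonoOn w (Set.Ioi 0))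
    (hwlog : Tendsto (fun y => w y / Real.log y) atTop atTop)
    (hlow : ∀ ε ∈ Set.Ioo (0 : ℝ) 1, ∃ xε > 0, ∀ x > xε,
      Real.exp ((1 - ε) * w x) ≤ ∫ u in Set.Ioc 0 x, Real.exp (w u)) :
    ∀ p > 0, ∀ ε, 0 < ε → ε < p → ∃ xpε > 0, ∀ x > xpε,
      Real.exp ((p - ε) * w x) ≤ ∫ u in Set.Ioc 0 x, Real.exp (p * w u) :=
  integral_exp_pw_lower_bound_general w hwmono hwlog hlow
end

section
/- Let w : (0,∞) → (0,∞) be increasing, locally absolutely continuous on (c,∞) for some c > 0, with w(y)/log y → ∞, and suppose for every ε ∈ (0,1) there is y_ε > c such that w′(y) ≤ e^{ε w(y)} a.e. on (y_ε,∞). Then for every ε ∈ (0,1) there is x_ε > 0 such that ∫₀^x e^{w(u)} du ≥ e^{(1-ε)w(x)} for all x > x_ε. -/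
/-!
It suffices to integrate over the last stretch `(x - L, x]` with `L = exp (-(ε/2) w x)`.
There `w' ≤ exp ((ε/2) w) ≤ exp ((ε/2) w x)` a.e., so `w` drops by at most
`L exp ((ε/2) w x) = 1` below `w x`, and the integral is at least
`L exp (w x - 1) = exp ((1 - ε/2) w x - 1)`, which exceeds `exp ((1 - ε) w x)` as soon as
`(ε/2) w x ≥ 1`; this holds for large `x` because `w` grows faster than `log`.
-/

open Filter MeasureTheory Set Real

theorem tendsto_atTop_of_tendsto_div_log_atTop {f : ℝ → ℝ}
    (hf : Tendsto (fun y => f y / log y) atTop atTop) : Tendsto f atTop atTop := by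
  refine tendsto_atTop_mono' atTop ?_ tendsto_log_atTop
  filter_upwards [hf.eventually_ge_atTop 1, eventually_gt_atTop 1] with y hfy hy
  have hlog : 0 < log y := log_pos hy
  simpa [div_mul_cancel₀ _ hlog.ne'] using mul_le_mul_of_nonneg_right hfy hlog.le

theorem MonotoneOn.integrableOn_Ioc_of_nonneg {f : ℝ → ℝ} {a b : ℝ}
    (hf : MonotoneOn f (Ioc a b)) (hf0 : ∀ u ∈ Ioc a b, 0 ≤ f u) :
    IntegrableOn f (Ioc a b) := by
  refine IntegrableOn.of_bound measure_Ioc_lt_top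
    (aemeasurable_restrict_of_monotoneOn measurableSet_Ioc hf).aestronglyMeasurable (f b) ?_
  refine (ae_restrict_iff' measurableSet_Ioc).2 (ae_of_all _ fun u hu => ?_)
  rw [norm_of_nonneg (hf0 u hu)]
  exact hf hu ⟨hu.1.trans_le hu.2, le_rfl⟩ hu.2

theorem setIntegral_Ioc_le_mul_of_ae_le {g : ℝ → ℝ} {a b B : ℝ} (hab : a ≤ b)
    (hg : IntegrableOn g (Ioc a b)) (hgB : ∀ᵐ y, y ∈ Ioc a b → g y ≤ B) :
    ∫ y in Ioc a b, g y ≤ (b - a) * B := by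
  calc ∫ y in Ioc a b, g y ≤ ∫ _ in Ioc a b, B :=
        integral_mono_ae hg (integrableOn_const measure_Ioc_lt_top.ne)
          ((ae_restrict_iff' measurableSet_Ioc).2 hgB)
    _ = (b - a) * B := by rw [setIntegral_const, volume_real_Ioc_of_le hab, smul_eq_mul]

theorem sub_mul_le_setIntegral_Ioc {f : ℝ → ℝ} {a s b m : ℝ} (has : a ≤ s) (hsb : s ≤ b)
    (hf : IntegrableOn f (Ioc a b)) (hf0 : ∀ u ∈ Ioc a b, 0 ≤ f u)
    (hm : ∀ u ∈ Ioc s b, m ≤ f u) :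
    (b - s) * m ≤ ∫ u in Ioc a b, f u := by
  have hsub : Ioc s b ⊆ Ioc a b := Ioc_subset_Ioc_left has
  calc (b - s) * m = m * volume.real (Ioc s b) := by rw [volume_real_Ioc_of_le hsb, mul_comm]
    _ ≤ ∫ u in Ioc s b, f u :=
        setIntegral_ge_of_const_le_real measurableSet_Ioc measure_Ioc_lt_top.ne hm
          (hf.mono_set hsub)
    _ ≤ ∫ u in Ioc a b, f u :=
        setIntegral_mono_set hf ((ae_restrict_iff' measurableSet_Ioc).2 (ae_of_all _ hf0))
          hsub.eventuallyLE

theorem sub_le_mul_exp_of_deriv_le_exp {w w' : ℝ → ℝ} {u x δ : ℝ} (hux : u ≤ x) (hδ : 0 ≤ δ)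
    (hw : MonotoneOn w (Icc u x)) (hw' : IntegrableOn w' (Ioc u x))
    (hftc : w x - w u = ∫ y in Ioc u x, w' y)
    (hbound : ∀ᵐ y, y ∈ Ioc u x → w' y ≤ exp (δ * w y)) :
    w x - w u ≤ (x - u) * exp (δ * w x) := by
  rw [hftc]
  refine setIntegral_Ioc_le_mul_of_ae_le hux hw' ?_
  filter_upwards [hbound] with y hy hyux
  refine (hy hyux).trans (exp_le_exp.2 (mul_le_mul_of_nonneg_left ?_ hδ))
  exact hw (Ioc_subset_Icc_self hyux) (right_mem_Icc.2 hux) hyux.2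

theorem integral_exp_w_lower_bound_of_deriv_bound_general (w w' : ℝ → ℝ) (c : ℝ) (hc : 0 < c)
    (hwmono : StrictMonoOn w (Set.Ioi 0))
    (hac : ∀ a b : ℝ, c < a → a ≤ b →
      IntegrableOn w' (Set.Ioc a b) ∧ w b - w a = ∫ y in Set.Ioc a b, w' y)
    (hwlog : Tendsto (fun y => w y / Real.log y) atTop atTop)
    (hderiv : ∀ ε ∈ Set.Ioo (0 : ℝ) 1, ∃ yε > c,
      ∀ᵐ y : ℝ, y > yε → w' y ≤ Real.exp (ε * w y)) :
    ∀ ε ∈ Set.Ioo (0 : ℝ) 1, ∃ xε > 0, ∀ x > xε,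
      Real.exp ((1 - ε) * w x) ≤ ∫ u in Set.Ioc 0 x, Real.exp (w u) := by
  rintro ε ⟨hε0, hε1⟩
  obtain ⟨yε, hyc, hbound⟩ := hderiv (ε / 2) ⟨by linarith, by linarith⟩
  obtain ⟨M, hM⟩ := ((tendsto_atTop_of_tendsto_div_log_atTop hwlog).eventually_ge_atTop
    (2 / ε)).exists_forall_of_atTop
  refine ⟨max M (yε + 1), by linarith [le_max_right M (yε + 1)], fun x hx => ?_⟩
  rw [gt_iff_lt, max_lt_iff] at hx
  have hεw : 1 ≤ ε / 2 * w x := by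
    have := mul_le_mul_of_nonneg_left (hM x hx.1.le) (by linarith : 0 ≤ ε / 2)
    rwa [div_mul_div_cancel₀ two_ne_zero, div_self hε0.ne'] at this
  set L := exp (-(ε / 2 * w x)) with hL
  have hL0 : 0 < L := exp_pos _
  have hL1 : L ≤ 1 := exp_le_one_iff.2 (by linarith)
  have hnear : ∀ u ∈ Ioc (x - L) x, w x - 1 ≤ w u := by
    rintro u ⟨hLu, hux⟩
    have hcu : c < u := by linarith
    have hslope := sub_le_mul_exp_of_deriv_le_exp (δ := ε / 2) hux (by linarith)
      (hwmono.monotoneOn.mono fun y hy => (hc.trans hcu).trans_le hy.1)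
      (hac u x hcu hux).1 (hac u x hcu hux).2
      (by filter_upwards [hbound] with y hy hyux using hy (by linarith [hyux.1]))
    have : (x - u) * exp (ε / 2 * w x) ≤ L * exp (ε / 2 * w x) :=
      mul_le_mul_of_nonneg_right (by linarith) (exp_pos _).le
    rw [hL, ← exp_add, neg_add_cancel, exp_zero] at this
    linarith
  have hint : IntegrableOn (fun u => exp (w u)) (Ioc 0 x) :=
    ((exp_monotone.comp_monotoneOn hwmono.monotoneOn).mono Ioc_subset_Ioi_self
      ).integrableOn_Ioc_of_nonneg fun u _ => (exp_pos _).le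
  calc exp ((1 - ε) * w x) ≤ L * exp (w x - 1) := by
        rw [hL, ← exp_add]; exact exp_le_exp.2 (by linarith)
    _ = (x - (x - L)) * exp (w x - 1) := by ring
    _ ≤ ∫ u in Ioc 0 x, exp (w u) :=
        sub_mul_le_setIntegral_Ioc (by linarith) (by linarith) hint (fun u _ => (exp_pos _).le)
          fun u hu => exp_le_exp.2 (hnear u hu)

theorem integral_exp_w_lower_bound_of_deriv_bound (w w' : ℝ → ℝ) (c : ℝ) (hc : 0 < c)
    (hwpos : ∀ y > 0, 0 < w y) (hwmono : StrictMonoOn w (Set.Ioi 0))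
    (hac : ∀ a b : ℝ, c < a → a ≤ b →
      IntegrableOn w' (Set.Ioc a b) ∧ w b - w a = ∫ y in Set.Ioc a b, w' y)
    (hwlog : Tendsto (fun y => w y / Real.log y) atTop atTop)
    (hderiv : ∀ ε ∈ Set.Ioo (0 : ℝ) 1, ∃ yε > c,
      ∀ᵐ y : ℝ, y > yε → w' y ≤ Real.exp (ε * w y)) :
    ∀ ε ∈ Set.Ioo (0 : ℝ) 1, ∃ xε > 0, ∀ x > xε,
      Real.exp ((1 - ε) * w x) ≤ ∫ u in Set.Ioc 0 x, Real.exp (w u) :=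
  integral_exp_w_lower_bound_of_deriv_bound_general w w' c hc hwmono hac hwlog hderiv
end

section
/- Let w : (0,∞) → (0,∞) be increasing and locally absolutely continuous on (c,∞) for some c > 0, and suppose y ↦ w(y)/log y is nondecreasing on a neighborhood of infinity and tends to ∞. If for every ε ∈ (0,1) there exists y_ε > c with w′(y) ≤ e^{ε w(y)} a.e. on (y_ε,∞), then for every ε ∈ (0,1) there exists ỹ_ε > c with w′(y) ≥ e^{-ε w(y)} a.e. on (ỹ_ε,∞). -/
/-!
Far enough out, monotonicity of `w y / log y` bounds it on `(a, b]` by its value at `b`, so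
`∫_a^b w y / (y log y) dy ≤ (w b / log b) (log b - log a) ≤ w b - w a = ∫_a^b w'`.
By Lebesgue differentiation this gives `w' y ≥ w y / (y log y)` almost everywhere. Since
`w y / log y → ∞`, eventually `w y ≥ 1` and `y log y ≤ y ^ 2 ≤ exp (ε w y)`, hence
`w y / (y log y) ≥ exp (-ε w y)`.
-/

open Filter MeasureTheory
open Set Real intervalIntegral

theorem MeasureTheory.LocallyIntegrable.ae_nonneg_of_forall_setIntegral_Ioc_nonneg
    {f : ℝ → ℝ} (hf : LocallyIntegrable f) (h : ∀ a b, a ≤ b → 0 ≤ ∫ x in Ioc a b, f x) :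
    0 ≤ᵐ[volume] f := by
  have hint (a b : ℝ) : IntervalIntegrable f volume a b :=
    (hf.integrableOn_isCompact isCompact_uIcc).intervalIntegrable
  have hmono : Monotone fun x => ∫ t in (0 : ℝ)..x, f t := fun a b hab => by
    dsimp only
    rw [← integral_add_adjacent_intervals (hint 0 a) (hint a b), integral_of_le hab]
    linarith [h a b hab]
  filter_upwards [LocallyIntegrable.ae_hasDerivAt_integral hf] with x hx
  exact (hx 0).nonneg_of_monotone hmono

theorem ae_nonneg_on_Ioi_of_forall_setIntegral_Ioc_nonneg {f : ℝ → ℝ} {A : ℝ}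
    (hf : ∀ b, A ≤ b → IntegrableOn f (Ioc A b))
    (h : ∀ a b, A ≤ a → a ≤ b → 0 ≤ ∫ x in Ioc a b, f x) :
    ∀ᵐ x, A < x → 0 ≤ f x := by
  have hloc : LocallyIntegrable ((Ioi A).indicator f) := fun x => by
    refine ⟨Iio (max x A + 1), Iio_mem_nhds (by linarith [le_max_left x A]), ?_⟩
    rw [integrableOn_indicator_iff measurableSet_Ioi]
    exact (hf _ (by linarith [le_max_right x A])).mono_set fun y hy => ⟨hy.1, hy.2.le⟩
  have hnonneg := hloc.ae_nonneg_of_forall_setIntegral_Ioc_nonneg fun a b _ => by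
    rw [setIntegral_indicator measurableSet_Ioi, Ioc_inter_Ioi]
    rcases le_or_gt (a ⊔ A) b with hab | hba
    · exact h _ b le_sup_right hab
    · simp [Ioc_eq_empty_of_le hba.le]
  filter_upwards [hnonneg] with x hx hAx
  simpa [indicator_of_mem (mem_Ioi.2 hAx)] using hx

theorem integrableOn_div_mul_log {w : ℝ → ℝ} {a b : ℝ} (ha : 1 < a)
    (hmono : MonotoneOn (fun y => w y / log y) (Icc a b)) :
    IntegrableOn (fun y => w y / (y * log y)) (Ioc a b) := by
  have hinv : ContinuousOn (fun y : ℝ => y⁻¹) (Icc a b) :=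
    continuousOn_inv₀.mono fun y hy => (zero_lt_one.trans (ha.trans_le hy.1)).ne'
  refine ((hmono.integrableOn_isCompact isCompact_Icc).mul_continuousOn hinv isCompact_Icc
    |>.mono_set Ioc_subset_Icc_self).congr_fun (fun y _ => ?_) measurableSet_Ioc
  dsimp only
  ring

theorem setIntegral_div_mul_log_le_sub {w : ℝ → ℝ} {a b : ℝ} (ha : 1 < a) (hab : a ≤ b)
    (hmono : MonotoneOn (fun y => w y / log y) (Icc a b)) :
    ∫ y in Ioc a b, w y / (y * log y) ≤ w b - w a := by
  have ha0 : 0 < a := by linarith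
  have hla : 0 < log a := log_pos ha
  have hlb : 0 < log b := log_pos (by linarith)
  set r := w b / log b
  have hinv : IntegrableOn (fun y : ℝ => y⁻¹) (Ioc a b) :=
    (continuousOn_inv₀.mono fun y hy => (ha0.trans_le hy.1).ne').integrableOn_Icc.mono_set
      Ioc_subset_Icc_self
  have hbound : ∫ y in Ioc a b, w y / (y * log y) ≤ ∫ y in Ioc a b, r * y⁻¹ := by
    refine setIntegral_mono_on (integrableOn_div_mul_log ha hmono) (hinv.const_mul r)
      measurableSet_Ioc fun y hy => ?_
    rw [mul_comm y, ← div_div, div_eq_mul_inv]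
    exact mul_le_mul_of_nonneg_right
      (hmono ⟨hy.1.le, hy.2⟩ ⟨hab, le_rfl⟩ hy.2) (inv_nonneg.2 (ha0.trans hy.1).le)
  have hintegral : ∫ y in Ioc a b, r * y⁻¹ = r * (log b - log a) := by
    rw [MeasureTheory.integral_const_mul, ← integral_of_le hab,
      integral_inv_of_pos ha0 (by linarith), log_div (by linarith) ha0.ne']
  have hra : w a / log a ≤ r := hmono ⟨le_rfl, hab⟩ ⟨hab, le_rfl⟩ hab
  have hwa : w a ≤ r * log a := (div_le_iff₀ hla).1 hra
  have hwb : r * log b = w b := div_mul_cancel₀ _ hlb.ne'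
  linarith

theorem ae_div_mul_log_le_of_monotoneOn_div_log {w w' : ℝ → ℝ} {A : ℝ} (hA : 1 < A)
    (hac : ∀ a b, A ≤ a → a ≤ b →
      IntegrableOn w' (Ioc a b) ∧ w b - w a = ∫ y in Ioc a b, w' y)
    (hmono : MonotoneOn (fun y => w y / log y) (Ici A)) :
    ∀ᵐ y, A < y → w y / (y * log y) ≤ w' y := by
  have hmono' {a b : ℝ} (ha : A ≤ a) : MonotoneOn (fun y => w y / log y) (Icc a b) :=
    hmono.mono (Icc_subset_Ici_self.trans (Ici_subset_Ici.2 ha))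
  have hg {a b : ℝ} (ha : A ≤ a) : IntegrableOn (fun y => w y / (y * log y)) (Ioc a b) :=
    integrableOn_div_mul_log (hA.trans_le ha) (hmono' ha)
  have hnonneg := ae_nonneg_on_Ioi_of_forall_setIntegral_Ioc_nonneg
    (f := fun y => w' y - w y / (y * log y))
    (fun b hb => (hac A b le_rfl hb).1.sub (hg le_rfl)) fun a b ha hab => by
      rw [integral_sub (hac a b ha hab).1 (hg ha), ← (hac a b ha hab).2, sub_nonneg]
      exact setIntegral_div_mul_log_le_sub (hA.trans_le ha) hab (hmono' ha)
  filter_upwards [hnonneg] with y hy hAy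
  exact sub_nonneg.1 (hy hAy)

theorem exp_neg_mul_le_div_mul_log {x v ε : ℝ} (hx : 1 < x) (hv : 1 ≤ v)
    (hε : 2 * log x ≤ ε * v) : exp (-ε * v) ≤ v / (x * log x) := by
  have hx0 : 0 < x := by linarith
  have hlog : 0 < log x := log_pos hx
  rw [le_div_iff₀ (by positivity)]
  calc exp (-ε * v) * (x * log x) ≤ exp (-ε * v) * exp (2 * log x) := by
        rw [two_mul, exp_add, exp_log hx0]
        gcongr
        linarith [log_le_sub_one_of_pos hx0]
    _ = exp (2 * log x - ε * v) := by rw [← exp_add]; ring_nf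
    _ ≤ 1 := exp_le_one_iff.2 (by linarith)
    _ ≤ v := hv

theorem eventually_exp_neg_mul_le_div_mul_log {w : ℝ → ℝ} {ε : ℝ} (hε : 0 < ε)
    (htop : Tendsto (fun y => w y / log y) atTop atTop) :
    ∀ᶠ x in atTop, exp (-ε * w x) ≤ w x / (x * log x) := by
  filter_upwards [htop.eventually_ge_atTop (2 / ε), htop.eventually_ge_atTop 1,
    tendsto_log_atTop.eventually_ge_atTop 1, eventually_gt_atTop 1] with x hratio hratio_one hlog hx
  rw [le_div_iff₀ (by linarith)] at hratio hratio_one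
  rw [div_mul_eq_mul_div, div_le_iff₀ hε] at hratio
  exact exp_neg_mul_le_div_mul_log hx (by linarith) (by linarith)

theorem deriv_lower_bound_of_upper_bound_general (w w' : ℝ → ℝ) (c : ℝ)
    (hac : ∀ a b : ℝ, c < a → a ≤ b →
      IntegrableOn w' (Set.Ioc a b) ∧ w b - w a = ∫ y in Set.Ioc a b, w' y)
    (hratio_mono : ∃ y₀ > 1, MonotoneOn (fun y => w y / Real.log y) (Set.Ioi y₀))
    (hratio_top : Tendsto (fun y => w y / Real.log y) atTop atTop) :
    ∀ ε ∈ Set.Ioo (0 : ℝ) 1, ∃ yε > c,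
      ∀ᵐ y : ℝ, y > yε → Real.exp (-ε * w y) ≤ w' y := by
  obtain ⟨y₀, hy₀, hmono⟩ := hratio_mono
  rintro ε ⟨hε, -⟩
  obtain ⟨B, hB⟩ := eventually_atTop.1 (eventually_exp_neg_mul_le_div_mul_log hε hratio_top)
  obtain ⟨A, hA⟩ := exists_gt (max c (max y₀ B))
  rw [max_lt_iff, max_lt_iff] at hA
  obtain ⟨hcA, hy₀A, hBA⟩ := hA
  have hderiv := ae_div_mul_log_le_of_monotoneOn_div_log (hy₀.trans hy₀A)
    (fun a b ha hab => hac a b (hcA.trans_le ha) hab) (hmono.mono (Ici_subset_Ioi.2 hy₀A))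
  refine ⟨A, hcA, ?_⟩
  filter_upwards [hderiv] with y hy hAy
  exact (hB y (by linarith)).trans (hy hAy)

theorem deriv_lower_bound_of_upper_bound (w w' : ℝ → ℝ) (c : ℝ) (hc : 0 < c)
    (hwpos : ∀ y > 0, 0 < w y) (hwmono : StrictMonoOn w (Set.Ioi 0))
    (hac : ∀ a b : ℝ, c < a → a ≤ b →
      IntegrableOn w' (Set.Ioc a b) ∧ w b - w a = ∫ y in Set.Ioc a b, w' y)
    (hratio_mono : ∃ y₀ > 1, MonotoneOn (fun y => w y / Real.log y) (Set.Ioi y₀))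
    (hratio_top : Tendsto (fun y => w y / Real.log y) atTop atTop)
    (hupper : ∀ ε ∈ Set.Ioo (0 : ℝ) 1, ∃ yε > c,
      ∀ᵐ y : ℝ, y > yε → w' y ≤ Real.exp (ε * w y)) :
    ∀ ε ∈ Set.Ioo (0 : ℝ) 1, ∃ yε > c,
      ∀ᵐ y : ℝ, y > yε → Real.exp (-ε * w y) ≤ w' y :=
  deriv_lower_bound_of_upper_bound_general w w' c hac hratio_mono hratio_top
end

section
/- There exists an increasing positive function w on [0,∞) with w(y)/log y → ∞ as y → ∞, and an unbounded set A ⊆ (0,∞), such that ∫₀^x e^{w(u)} du ≤ e^{w(x)/2} for all x ∈ A. In particular, the lower bound ∫₀^x e^{w(u)} du ≥ e^{(1-ε)w(x)} for all large x fails for this w. -/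
/-!
Take the step weight `w y = 4 ^ ⌊y⌋₊` and let `A` be the positive integers. Up to `x = m + 1`
the integral of `exp ∘ w` only sees `w` below its jump at `x`, so it is
`∑_{k ≤ m} exp (4 ^ k) ≤ (m + 1) exp (4 ^ m) ≤ exp (2 · 4 ^ m) = exp (w x / 2)`.
Since `w y ≥ y ^ 2`, `w / log` still tends to infinity.
-/

open Filter MeasureTheory Set Finset Real

noncomputable def stepWeight (y : ℝ) : ℝ := 4 ^ ⌊y⌋₊

lemma stepWeight_pos (y : ℝ) : 0 < stepWeight y := by
  unfold stepWeight; positivity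

lemma stepWeight_monotone : Monotone stepWeight := fun _ _ h =>
  pow_le_pow_right₀ (by norm_num) (Nat.floor_mono h)

lemma sq_lt_stepWeight {y : ℝ} (hy : 0 ≤ y) : y ^ 2 < stepWeight y := by
  have hfloor : y < 2 ^ ⌊y⌋₊ := calc
    y < ⌊y⌋₊ + 1 := Nat.lt_floor_add_one y
    _ ≤ 2 ^ ⌊y⌋₊ := by exact_mod_cast Nat.lt_two_pow_self
  calc y ^ 2 < (2 ^ ⌊y⌋₊) ^ 2 := by gcongr
    _ = stepWeight y := by rw [stepWeight, ← pow_mul, mul_comm, pow_mul]; norm_num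

lemma tendsto_div_log_atTop_of_sq_le {w : ℝ → ℝ} (hw : ∀ᶠ y in atTop, y ^ 2 ≤ w y) :
    Tendsto (fun y => w y / log y) atTop atTop := by
  refine tendsto_atTop_mono' atTop ?_ tendsto_id
  filter_upwards [hw, eventually_gt_atTop 1] with y hwy hy
  have hlog_pos : 0 < log y := log_pos hy
  have hlog_le : log y ≤ y := (log_le_sub_one_of_pos (by linarith)).trans (by linarith)
  rw [id, le_div_iff₀ hlog_pos]
  nlinarith

section NatFloor

variable {E : Type*} [NormedAddCommGroup E]

lemma natFloor_eq_of_mem_Ioo {k : ℕ} {u : ℝ} (hu : u ∈ Ioo (k : ℝ) (k + 1)) : ⌊u⌋₊ = k :=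
  (Nat.floor_eq_iff (by linarith [hu.1, Nat.cast_nonneg (α := ℝ) k])).2 ⟨hu.1.le, hu.2⟩

lemma integrableOn_comp_natFloor_Ioc (f : ℕ → E) (k : ℕ) :
    IntegrableOn (fun u => f ⌊u⌋₊) (Ioc (k : ℝ) (k + 1)) := by
  rw [integrableOn_Ioc_iff_integrableOn_Ioo]
  exact (integrableOn_const (C := f k) (by simp)).congr_fun
    (fun u hu => by rw [natFloor_eq_of_mem_Ioo hu]) measurableSet_Ioo

lemma setIntegral_comp_natFloor_Ioc [NormedSpace ℝ E] [CompleteSpace E] (f : ℕ → E) (k : ℕ) :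
    ∫ u in Ioc (k : ℝ) (k + 1), f ⌊u⌋₊ = f k := by
  rw [integral_Ioc_eq_integral_Ioo,
    setIntegral_congr_fun measurableSet_Ioo (g := fun _ => f k)
      (fun u hu => by rw [natFloor_eq_of_mem_Ioo hu]), setIntegral_const]
  simp

lemma setIntegral_comp_natFloor_Ioc_zero [NormedSpace ℝ E] [CompleteSpace E] (f : ℕ → E) (n : ℕ) :
    ∫ u in Ioc (0 : ℝ) n, f ⌊u⌋₊ = ∑ k ∈ range n, f k := by
  have hsum := intervalIntegral.sum_integral_adjacent_intervals (a := fun k : ℕ => (k : ℝ))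
    (f := fun u => f ⌊u⌋₊) (μ := volume) (n := n) fun k _ => by
      rw [intervalIntegrable_iff_integrableOn_Ioc_of_le (by simp), Nat.cast_succ]
      exact integrableOn_comp_natFloor_Ioc f k
  simp only [Nat.cast_succ, Nat.cast_zero] at hsum
  rw [← intervalIntegral.integral_of_le n.cast_nonneg, ← hsum]
  refine sum_congr rfl fun k _ => ?_
  rw [intervalIntegral.integral_of_le (by linarith), setIntegral_comp_natFloor_Ioc]

end NatFloor

lemma sum_range_succ_exp_four_pow_le (m : ℕ) :
    ∑ k ∈ range (m + 1), exp ((4 : ℝ) ^ k) ≤ exp (2 * 4 ^ m) := by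
  have hterm : ∀ k ∈ range (m + 1), exp ((4 : ℝ) ^ k) ≤ exp (4 ^ m) := fun k hk =>
    exp_le_exp.2 (pow_le_pow_right₀ (by norm_num) (Nat.lt_succ_iff.1 (mem_range.1 hk)))
  have hcount : ((m + 1 : ℕ) : ℝ) ≤ exp (4 ^ m) := calc
    ((m + 1 : ℕ) : ℝ) ≤ 4 ^ m + 1 := by
      push_cast; gcongr; exact_mod_cast (Nat.lt_pow_self (n := m) (by norm_num : 1 < 4)).le
    _ ≤ exp (4 ^ m) := add_one_le_exp _
  calc ∑ k ∈ range (m + 1), exp ((4 : ℝ) ^ k) ≤ (m + 1 : ℕ) * exp (4 ^ m) := by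
        simpa using sum_le_card_nsmul _ _ _ hterm
    _ ≤ exp (4 ^ m) * exp (4 ^ m) := by gcongr
    _ = exp (2 * 4 ^ m) := by rw [← exp_add, two_mul]

theorem counterexample_lower_bound_fails :
    ∃ (w : ℝ → ℝ) (A : Set ℝ),
      (∀ y ≥ 0, 0 < w y) ∧ MonotoneOn w (Set.Ici 0) ∧
      Tendsto (fun y => w y / Real.log y) atTop atTop ∧
      A ⊆ Set.Ioi 0 ∧ (∀ M : ℝ, ∃ x ∈ A, x > M) ∧
      ∀ x ∈ A, (∫ u in Set.Ioc 0 x, Real.exp (w u)) ≤ Real.exp (w x / 2) := by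
  refine ⟨stepWeight, Set.range fun m : ℕ => ((m + 1 : ℕ) : ℝ), fun y _ => stepWeight_pos y,
    stepWeight_monotone.monotoneOn _,
    tendsto_div_log_atTop_of_sq_le <| (eventually_ge_atTop 0).mono fun y hy =>
      (sq_lt_stepWeight hy).le, ?_, fun M => ⟨_, ⟨⌈M⌉₊, rfl⟩, ?_⟩, ?_⟩
  · rintro _ ⟨m, rfl⟩
    exact (Nat.cast_pos (α := ℝ)).2 m.succ_pos
  · push_cast; linarith [Nat.le_ceil M]
  · rintro _ ⟨m, rfl⟩
    have hw : stepWeight ((m + 1 : ℕ) : ℝ) / 2 = 2 * 4 ^ m := by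
      rw [stepWeight, Nat.floor_natCast, pow_succ]; ring
    rw [hw]
    exact (setIntegral_comp_natFloor_Ioc_zero (fun k => exp ((4 : ℝ) ^ k)) (m + 1)).trans_le
      (sum_range_succ_exp_four_pow_le m)
end
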